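/- Let ρ(p) be an asymptotically polytropic/linear equation of state and let (m(r), p(r)) be a regular solution of the TOV system with finite radius R < ∞ and finite total mass M < ∞. Then GM/(c²R) < 1/2, and the metric coefficient 1 − 2Gm(r)/(c²r) is bounded away from zero throughout the fluid body: inf_{r ∈ (0,R)} (1 − 2Gm(r)/(c²r)) > 0. -/

import Mathlib

open Real Set Filter Topology

/-- The domain `(0, R)` of radii, where `R ∈ (0,∞]`. -/
def tovDomain (R : ENNReal) : Set ℝ := {r : ℝ | 0 < r ∧ ENNReal.ofReal r < R}

/-- `(m, p)` is a solution of the TOV system on `(0, R)` with `p > 0`, `m > 0` and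
`2Gm < c²r`. -/
def IsTOVSolution (G c : ℝ) (ρ m p : ℝ → ℝ) (R : ENNReal) : Prop :=
  ∀ r ∈ tovDomain R,
    0 < p r ∧ 0 < m r ∧ 2 * G * m r < c ^ 2 * r ∧
    HasDerivAt m (4 * Real.pi * r ^ 2 * ρ (p r)) r ∧
    HasDerivAt p (-(G * m r * ρ (p r) / r ^ 2) * (1 + p r / (ρ (p r) * c ^ 2)) *
      (1 + 4 * Real.pi * r ^ 3 * p r / (m r * c ^ 2)) *
      (1 - 2 * G * m r / (c ^ 2 * r))⁻¹) r

/-- `ρ` is a barotropic equation of state: continuous on `[0,∞)`, C² and positive on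
`(0,∞)`, with `dρ/dp ≥ 0`. -/
def IsBarotropic (ρ : ℝ → ℝ) : Prop :=
  ContinuousOn ρ (Ici 0) ∧ ContDiffOn ℝ 2 ρ (Ioi 0) ∧
  (∀ q ≥ 0, 0 ≤ ρ q) ∧ (∀ q > 0, 0 < ρ q) ∧ (∀ q > 0, 0 ≤ deriv ρ q)

/-- The interval `(0, R)` is maximal: the solution admits no extension to a larger
interval. -/
def IsMaximalTOVSolution (G c : ℝ) (ρ m p : ℝ → ℝ) (R : ENNReal) : Prop :=
  IsTOVSolution G c ρ m p R ∧
  ∀ (R' : ENNReal) (m' p' : ℝ → ℝ), R < R' → IsTOVSolution G c ρ m' p' R' →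
    Set.EqOn m' m (tovDomain R) → ¬ Set.EqOn p' p (tovDomain R)

/-- A regular solution of the TOV system with central pressure `pc > 0`: a maximal
solution with `p(r) → pc` and `m(r)/r³ → (4π/3)ρ(pc)` as `r → 0⁺`. -/
def IsRegularTOVSolution (G c : ℝ) (ρ m p : ℝ → ℝ) (R : ENNReal) (pc : ℝ) : Prop :=
  IsMaximalTOVSolution G c ρ m p R ∧ 0 < pc ∧
  Filter.Tendsto p (nhdsWithin 0 (Ioi 0)) (nhds pc) ∧
  Filter.Tendsto (fun r => m r / r ^ 3) (nhdsWithin 0 (Ioi 0))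
    (nhds (4 * Real.pi / 3 * ρ pc))

/-- `ρ` is an asymptotically polytropic (as `p → 0`, with polytropic index `n₀`) and
asymptotically linear (as `p → ∞`, with `p = (γ₁−1)ρc²`) equation of state: there is
a strictly increasing C¹ bijection `ω : (0,∞) → (0,∞)` of `p`, whose logarithmic
derivative `f(p) = p·ω'(p)/ω(p)` has positive limits `f₀` (at `0`) and `f₁` (at `∞`),
such that, with `Ω = ω/(1+ω)`, the functions `Υ = (p/ρ)(dρ/dp)` and `σ = p/(ρc²)`
extend to C¹ functions of `Ω` on `[0,1]` with `Υ(0) = n₀/(n₀+1) < 1`, `Υ(1) = 1`,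
`σ(0) = 0`, `σ(1) = γ₁ − 1`, `1 < γ₁ ≤ 2`, and `f₀ < 1 − n₀/(n₀+1)`. -/
def IsAsymptoticallyPolytropicLinear (c : ℝ) (ρ : ℝ → ℝ) (n₀ γ₁ : ℝ) : Prop :=
  0 ≤ n₀ ∧ 1 < γ₁ ∧ γ₁ ≤ 2 ∧
  ∃ (ω ω' : ℝ → ℝ) (f₀ f₁ : ℝ) (Υe σe : ℝ → ℝ),
    StrictMonoOn ω (Ioi 0) ∧
    Set.BijOn ω (Ioi 0) (Ioi 0) ∧
    (∀ q > 0, HasDerivAt ω (ω' q) q) ∧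
    ContinuousOn ω' (Ioi 0) ∧
    0 < f₀ ∧ 0 < f₁ ∧
    Filter.Tendsto (fun q => q * ω' q / ω q) (nhdsWithin 0 (Ioi 0)) (nhds f₀) ∧
    Filter.Tendsto (fun q => q * ω' q / ω q) Filter.atTop (nhds f₁) ∧
    ContDiffOn ℝ 1 Υe (Icc 0 1) ∧
    ContDiffOn ℝ 1 σe (Icc 0 1) ∧
    (∀ q > 0, Υe (ω q / (1 + ω q)) = q / ρ q * deriv ρ q) ∧
    (∀ q > 0, σe (ω q / (1 + ω q)) = q / (ρ q * c ^ 2)) ∧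
    Υe 0 = n₀ / (n₀ + 1) ∧ n₀ / (n₀ + 1) < 1 ∧ Υe 1 = 1 ∧
    σe 0 = 0 ∧ σe 1 = γ₁ - 1 ∧
    f₀ < 1 - n₀ / (n₀ + 1)

/-!
Write `y = 1 - 2Gm/(c²r)`. It is positive on `(0, R)`, tends to `1` at the centre and to
`y_R = 1 - 2GM/(c²R)` at the surface, so everything reduces to `y_R > 0`. Suppose `y_R = 0`.
As `p` decreases, the density `ρ(p)` has a surface limit `ρ_R`. If `ρ_R = 0`, then
`y' = 2Gm/(c²r²) - 8πGrρ/c²` tends to `2GM/(c²R²) > 0`, so `y` increases to `0` near `R`,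
which is impossible for a positive function. If `ρ_R > 0`, then `y'` is bounded below, so
`y ≤ K (R - r)`, and the TOV equation gives `p' ≤ -C/(R - r)`; hence `p ≤ A + C log (R - r)`
tends to `-∞`, contradicting `p > 0`.
-/

section OneSidedLimits

variable {f f' : ℝ → ℝ} {a b : ℝ}

lemma monotoneOn_Ioo_of_hasDerivAt_nonneg (hf : ∀ x ∈ Ioo a b, HasDerivAt f (f' x) x)
    (hf' : ∀ x ∈ Ioo a b, 0 ≤ f' x) : MonotoneOn f (Ioo a b) :=
  monotoneOn_of_hasDerivWithinAt_nonneg (convex_Ioo a b)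
    (fun x hx => (hf x hx).continuousAt.continuousWithinAt)
    (fun x hx => (hf x (by rwa [interior_Ioo] at hx)).hasDerivWithinAt)
    (fun x hx => hf' x (by rwa [interior_Ioo] at hx))

lemma MonotoneOn.le_of_tendsto_nhdsLT {L x : ℝ} (hf : MonotoneOn f (Ioo a b))
    (hL : Tendsto f (𝓝[<] b) (𝓝 L)) (hx : x ∈ Ioo a b) : f x ≤ L :=
  ge_of_tendsto hL <| mem_of_superset (Ioo_mem_nhdsLT hx.2) fun _ hy =>
    hf hx ⟨hx.1.trans hy.1, hy.2⟩ hy.1.le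

lemma exists_monotoneOn_Ioo_of_eventually_hasDerivAt_nonneg
    (hf : ∀ᶠ x in 𝓝[<] b, HasDerivAt f (f' x) x ∧ 0 ≤ f' x) :
    ∃ a < b, MonotoneOn f (Ioo a b) := by
  obtain ⟨a, ha, hsub⟩ := mem_nhdsLT_iff_exists_Ioo_subset.mp hf
  exact ⟨a, ha, monotoneOn_Ioo_of_hasDerivAt_nonneg (fun x hx => (hsub hx).1)
    fun x hx => (hsub hx).2⟩

lemma eventually_le_of_tendsto_of_hasDerivAt_nonneg {L : ℝ}
    (hf : ∀ᶠ x in 𝓝[<] b, HasDerivAt f (f' x) x ∧ 0 ≤ f' x)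
    (hL : Tendsto f (𝓝[<] b) (𝓝 L)) : ∀ᶠ x in 𝓝[<] b, f x ≤ L := by
  obtain ⟨a, hab, hmono⟩ := exists_monotoneOn_Ioo_of_eventually_hasDerivAt_nonneg hf
  filter_upwards [Ioo_mem_nhdsLT hab] with x hx using hmono.le_of_tendsto_nhdsLT hL hx

lemma eventually_le_mul_sub_of_hasDerivAt_ge {K : ℝ}
    (hf : ∀ᶠ x in 𝓝[<] b, HasDerivAt f (f' x) x ∧ -K ≤ f' x)
    (hf₀ : Tendsto f (𝓝[<] b) (𝓝 0)) : ∀ᶠ x in 𝓝[<] b, f x ≤ K * (b - x) := by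
  have hg : ∀ᶠ x in 𝓝[<] b,
      HasDerivAt (fun y => f y + K * y) (f' x + K * 1) x ∧ 0 ≤ f' x + K * 1 := by
    filter_upwards [hf] with x hx
    exact ⟨hx.1.add ((hasDerivAt_id x).const_mul K), by linarith [hx.2]⟩
  have hlim : Tendsto (fun y => f y + K * y) (𝓝[<] b) (𝓝 (0 + K * b)) :=
    hf₀.add (tendsto_nhdsWithin_of_tendsto_nhds ((continuous_const_mul K).tendsto b))
  filter_upwards [eventually_le_of_tendsto_of_hasDerivAt_nonneg hg hlim] with x hx
  linarith

lemma tendsto_atBot_of_hasDerivAt_le_neg_div {C : ℝ} (hC : 0 < C)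
    (hf : ∀ᶠ x in 𝓝[<] b, HasDerivAt f (f' x) x ∧ f' x ≤ -(C / (b - x))) :
    Tendsto f (𝓝[<] b) atBot := by
  have hg : ∀ᶠ x in 𝓝[<] b, HasDerivAt (fun y => C * log (b - y) - f y)
      (C * (-1 / (b - x)) - f' x) x ∧ 0 ≤ C * (-1 / (b - x)) - f' x := by
    filter_upwards [hf, self_mem_nhdsWithin] with x hx hxb
    have hlog : HasDerivAt (fun y => log (b - y)) (-1 / (b - x)) x :=
      ((hasDerivAt_id x).const_sub b).log (sub_ne_zero.mpr (ne_of_gt hxb))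
    refine ⟨(hlog.const_mul C).sub hx.1, ?_⟩
    have : C * (-1 / (b - x)) = -(C / (b - x)) := by ring
    linarith [hx.2]
  obtain ⟨a, hab, hmono⟩ := exists_monotoneOn_Ioo_of_eventually_hasDerivAt_nonneg hg
  obtain ⟨x₀, hx₀⟩ := nonempty_Ioo.mpr hab
  have hdist : Tendsto (fun x => b - x) (𝓝[<] b) (𝓝[>] 0) := by
    refine tendsto_nhdsWithin_of_tendsto_nhds_of_eventually_within _ ?_ ?_
    · simpa using tendsto_nhdsWithin_of_tendsto_nhds ((continuous_sub_left b).tendsto b)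
    · filter_upwards [self_mem_nhdsWithin] with x (hx : x < b) using sub_pos.mpr hx
  refine tendsto_atBot_mono' _ ?_ <| tendsto_atBot_add_const_left _ (f x₀ - C * log (b - x₀))
    ((tendsto_log_nhdsGT_zero.comp hdist).const_mul_atBot hC)
  filter_upwards [Ioo_mem_nhdsLT hx₀.2] with x hx
  have := hmono hx₀ ⟨hx₀.1.trans hx.1, hx.2⟩ hx.1.le
  simp only [Function.comp] at this ⊢
  linarith

lemma exists_pos_le_of_tendsto_pos {la lb : ℝ} (hab : a < b) (hf : ContinuousOn f (Ioo a b))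
    (hpos : ∀ x ∈ Ioo a b, 0 < f x) (ha : Tendsto f (𝓝[>] a) (𝓝 la)) (hla : 0 < la)
    (hb : Tendsto f (𝓝[<] b) (𝓝 lb)) (hlb : 0 < lb) :
    ∃ ε > 0, ∀ x ∈ Ioo a b, ε ≤ f x := by
  obtain ⟨u, hu, hleft⟩ := (mem_nhdsGT_iff_exists_mem_Ioc_Ioo_subset hab).mp
    (ha.eventually (lt_mem_nhds (half_lt_self hla)))
  obtain ⟨l, hl, hright⟩ := (mem_nhdsLT_iff_exists_mem_Ico_Ioo_subset hab).mp
    (hb.eventually (lt_mem_nhds (half_lt_self hlb)))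
  have hsub : Icc u l ⊆ Ioo a b := Icc_subset_Ioo hu.1 hl.2
  obtain ⟨ε₀, hε₀, hmid⟩ := isCompact_Icc.exists_forall_le' (hf.mono hsub)
    fun x hx => hpos x (hsub hx)
  refine ⟨min (min (la / 2) (lb / 2)) ε₀, by positivity, fun x hx => ?_⟩
  rcases lt_or_ge x u with hxu | hux
  · exact (min_le_left _ _).trans <| (min_le_left _ _).trans (hleft ⟨hx.1, hxu⟩).le
  rcases le_or_gt x l with hxl | hlx
  · exact (min_le_right _ _).trans (hmid x ⟨hux, hxl⟩)
  · exact (min_le_left _ _).trans <| (min_le_right _ _).trans (hright ⟨hlx, hx.2⟩).le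

end OneSidedLimits

lemma tovDomain_ofReal (R₀ : ℝ) : tovDomain (ENNReal.ofReal R₀) = Ioo 0 R₀ := by
  ext r
  simp only [tovDomain, mem_ofPred_eq, mem_Ioo]
  exact and_congr_right fun hr => ENNReal.ofReal_lt_ofReal_iff_of_nonneg hr.le

noncomputable def metricCoeff (G c : ℝ) (m : ℝ → ℝ) (r : ℝ) : ℝ := 1 - 2 * G * m r / (c ^ 2 * r)

section MetricCoeff

variable {G c : ℝ} {m : ℝ → ℝ}

lemma tendsto_metricCoeff_nhdsGT_zero {L : ℝ}
    (hm : Tendsto (fun r => m r / r ^ 3) (𝓝[>] 0) (𝓝 L)) :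
    Tendsto (metricCoeff G c m) (𝓝[>] 0) (𝓝 1) := by
  have hsq : Tendsto (fun r : ℝ => r ^ 2) (𝓝[>] 0) (𝓝 0) := by
    simpa using tendsto_nhdsWithin_of_tendsto_nhds ((continuous_pow 2).tendsto (0 : ℝ))
  have h := tendsto_const_nhds (x := (1 : ℝ)).sub ((hm.const_mul (2 * G / c ^ 2)).mul hsq)
  rw [mul_zero, sub_zero] at h
  refine h.congr' ?_
  filter_upwards [self_mem_nhdsWithin] with r (hr : 0 < r)
  simp only [metricCoeff]
  field_simp

lemma tendsto_metricCoeff_nhdsLT {R₀ M : ℝ} (hc : c ≠ 0) (hR₀ : R₀ ≠ 0)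
    (hM : Tendsto m (𝓝[<] R₀) (𝓝 M)) :
    Tendsto (metricCoeff G c m) (𝓝[<] R₀) (𝓝 (1 - 2 * G * M / (c ^ 2 * R₀))) :=
  tendsto_const_nhds.sub <| (hM.const_mul (2 * G)).div
    (tendsto_nhdsWithin_of_tendsto_nhds ((continuous_const_mul (c ^ 2)).tendsto R₀))
    (by positivity)

lemma tendsto_metricCoeff_deriv {d : ℝ → ℝ} {R₀ M dR : ℝ} (hc : c ≠ 0) (hR₀ : R₀ ≠ 0)
    (hM : Tendsto m (𝓝[<] R₀) (𝓝 M)) (hd : Tendsto d (𝓝[<] R₀) (𝓝 dR)) :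
    Tendsto (fun r => 2 * G * m r / (c ^ 2 * r ^ 2) - 8 * π * G * r * d r / c ^ 2) (𝓝[<] R₀)
      (𝓝 (2 * G * M / (c ^ 2 * R₀ ^ 2) - 8 * π * G * R₀ * dR / c ^ 2)) := by
  have hr : Tendsto (fun r : ℝ => r) (𝓝[<] R₀) (𝓝 R₀) :=
    tendsto_nhdsWithin_of_tendsto_nhds tendsto_id
  exact ((hM.const_mul (2 * G)).div ((hr.pow 2).const_mul (c ^ 2)) (by positivity)).sub
    (((hr.const_mul (8 * π * G)).mul hd).div_const (c ^ 2))

end MetricCoeff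

namespace IsTOVSolution

variable {G c : ℝ} {ρ m p : ℝ → ℝ} {R₀ r M : ℝ}

lemma metricCoeff_pos (hsol : IsTOVSolution G c ρ m p (ENNReal.ofReal R₀)) (hc : c ≠ 0)
    (hr : r ∈ Ioo 0 R₀) : 0 < metricCoeff G c m r := by
  obtain ⟨-, -, hlt, -⟩ := hsol r (by rwa [tovDomain_ofReal])
  have : 0 < c ^ 2 * r := mul_pos (by positivity) hr.1
  rw [metricCoeff, sub_pos, div_lt_one this]
  exact hlt

lemma hasDerivAt_metricCoeff (hsol : IsTOVSolution G c ρ m p (ENNReal.ofReal R₀))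
    (hc : c ≠ 0) (hr : r ∈ Ioo 0 R₀) :
    HasDerivAt (metricCoeff G c m)
      (2 * G * m r / (c ^ 2 * r ^ 2) - 8 * π * G * r * ρ (p r) / c ^ 2) r := by
  obtain ⟨-, -, -, hdm, -⟩ := hsol r (by rwa [tovDomain_ofReal])
  have h : HasDerivAt (fun s => 1 - 2 * G / c ^ 2 * (m s / s))
      (-(2 * G / c ^ 2 * ((4 * π * r ^ 2 * ρ (p r) * r - m r * 1) / r ^ 2))) r :=
    ((hdm.fun_div (hasDerivAt_id' r) hr.1.ne').const_mul _).const_sub 1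
  convert h using 1
  · funext s
    simp only [metricCoeff]
    ring
  · field_simp
    ring

lemma monotoneOn_mass (hsol : IsTOVSolution G c ρ m p (ENNReal.ofReal R₀))
    (hρ : ∀ q ≥ 0, 0 ≤ ρ q) : MonotoneOn m (Ioo 0 R₀) := by
  refine monotoneOn_Ioo_of_hasDerivAt_nonneg
    (fun r hr => (hsol r (by rwa [tovDomain_ofReal])).2.2.2.1) fun r hr => ?_
  have := hρ _ (hsol r (by rwa [tovDomain_ofReal])).1.le
  positivity

lemma exists_hasDerivAt_pressure_le (hsol : IsTOVSolution G c ρ m p (ENNReal.ofReal R₀))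
    (hG : 0 ≤ G) (hc : c ≠ 0) (hρ : ∀ q ≥ 0, 0 ≤ ρ q) (hr : r ∈ Ioo 0 R₀) :
    ∃ p', HasDerivAt p p' r ∧ p' ≤ -(G * m r * ρ (p r) / r ^ 2 / metricCoeff G c m r) := by
  obtain ⟨hp, hm, -, -, hdp⟩ := hsol r (by rwa [tovDomain_ofReal])
  have hρp := hρ _ hp.le
  have hr₀ := hr.1
  have hA : 0 ≤ G * m r * ρ (p r) / r ^ 2 / metricCoeff G c m r :=
    div_nonneg (by positivity) (hsol.metricCoeff_pos hc hr).le
  have hB : 1 ≤ 1 + p r / (ρ (p r) * c ^ 2) := le_add_of_nonneg_right (by positivity)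
  have hC : 1 ≤ 1 + 4 * π * r ^ 3 * p r / (m r * c ^ 2) :=
    le_add_of_nonneg_right (by positivity)
  refine ⟨_, hdp, ?_⟩
  calc _ = -(G * m r * ρ (p r) / r ^ 2 / metricCoeff G c m r *
        ((1 + p r / (ρ (p r) * c ^ 2)) * (1 + 4 * π * r ^ 3 * p r / (m r * c ^ 2)))) := by
        rw [metricCoeff]; ring
    _ ≤ _ := neg_le_neg (le_mul_of_one_le_right hA (one_le_mul_of_one_le_of_one_le hB hC))

lemma antitoneOn_pressure (hsol : IsTOVSolution G c ρ m p (ENNReal.ofReal R₀))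
    (hG : 0 ≤ G) (hc : c ≠ 0) (hρ : ∀ q ≥ 0, 0 ≤ ρ q) : AntitoneOn p (Ioo 0 R₀) := by
  choose! p' hp' hle using fun r (hr : r ∈ Ioo 0 R₀) =>
    hsol.exists_hasDerivAt_pressure_le hG hc hρ hr
  refine antitoneOn_of_hasDerivWithinAt_nonpos (convex_Ioo 0 R₀)
    (fun r hr => (hp' r hr).continuousAt.continuousWithinAt)
    (fun r hr => (hp' r (by rwa [interior_Ioo] at hr)).hasDerivWithinAt) fun r hr => ?_
  rw [interior_Ioo] at hr
  obtain ⟨hp, hm, -⟩ := hsol r (by rwa [tovDomain_ofReal])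
  have := hρ _ hp.le
  have := hr.1
  have := hsol.metricCoeff_pos hc hr
  exact (hle r hr).trans (neg_nonpos.mpr (by positivity))

lemma exists_tendsto_density (hsol : IsTOVSolution G c ρ m p (ENNReal.ofReal R₀))
    (hG : 0 ≤ G) (hc : c ≠ 0) (hρ₀ : ∀ q ≥ 0, 0 ≤ ρ q) (hρc : ContinuousOn ρ (Ici 0))
    (hR₀ : 0 < R₀) : ∃ ρR ≥ 0, Tendsto (fun r => ρ (p r)) (𝓝[<] R₀) (𝓝 ρR) := by
  have hp : ∀ r ∈ Ioo 0 R₀, 0 < p r := fun r hr => (hsol r (by rwa [tovDomain_ofReal])).1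
  have hlim := (hsol.antitoneOn_pressure hG hc hρ₀).tendsto_nhdsWithin_Ioo_left
    (nonempty_Ioo.mpr hR₀) ⟨0, by rintro _ ⟨r, hr, rfl⟩; exact (hp r hr).le⟩
  have hevent : ∀ᶠ r in 𝓝[<] R₀, 0 < p r := by
    filter_upwards [Ioo_mem_nhdsLT hR₀] using hp
  have hP : 0 ≤ sInf (p '' Ioo 0 R₀) := ge_of_tendsto hlim (hevent.mono fun _ => le_of_lt)
  refine ⟨_, hρ₀ _ hP, (hρc _ hP).tendsto.comp ?_⟩
  exact tendsto_nhdsWithin_iff.mpr ⟨hlim, hevent.mono fun _ => le_of_lt⟩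

lemma mass_pos_of_tendsto (hsol : IsTOVSolution G c ρ m p (ENNReal.ofReal R₀))
    (hρ₀ : ∀ q ≥ 0, 0 ≤ ρ q) (hR₀ : 0 < R₀) (hM : Tendsto m (𝓝[<] R₀) (𝓝 M)) : 0 < M := by
  have hr : R₀ / 2 ∈ Ioo 0 R₀ := ⟨half_pos hR₀, half_lt_self hR₀⟩
  exact (hsol (R₀ / 2) (by rwa [tovDomain_ofReal])).2.1.trans_le <|
    (hsol.monotoneOn_mass hρ₀).le_of_tendsto_nhdsLT hM hr

lemma not_tendsto_metricCoeff_zero_of_density_zero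
    (hsol : IsTOVSolution G c ρ m p (ENNReal.ofReal R₀)) (hG : 0 < G) (hc : c ≠ 0)
    (hR₀ : 0 < R₀) (hM : Tendsto m (𝓝[<] R₀) (𝓝 M)) (hMpos : 0 < M)
    (hρ : Tendsto (fun r => ρ (p r)) (𝓝[<] R₀) (𝓝 0)) :
    ¬ Tendsto (metricCoeff G c m) (𝓝[<] R₀) (𝓝 0) := by
  intro hy
  have hslope := tendsto_metricCoeff_deriv (G := G) hc hR₀.ne' hM hρ
  rw [mul_zero, zero_div, sub_zero] at hslope
  have hdom : ∀ᶠ r in 𝓝[<] R₀, r ∈ Ioo 0 R₀ := Ioo_mem_nhdsLT hR₀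
  have hincr : ∀ᶠ r in 𝓝[<] R₀, HasDerivAt (metricCoeff G c m)
      (2 * G * m r / (c ^ 2 * r ^ 2) - 8 * π * G * r * ρ (p r) / c ^ 2) r ∧
      0 ≤ 2 * G * m r / (c ^ 2 * r ^ 2) - 8 * π * G * r * ρ (p r) / c ^ 2 := by
    filter_upwards [hdom, hslope.eventually (eventually_ge_nhds (by positivity))] with r hr hr'
    exact ⟨hsol.hasDerivAt_metricCoeff hc hr, hr'⟩
  obtain ⟨r, hr, hy₀⟩ :=
    (hdom.and (eventually_le_of_tendsto_of_hasDerivAt_nonneg hincr hy)).exists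
  exact (hsol.metricCoeff_pos hc hr).not_ge hy₀

lemma not_tendsto_metricCoeff_zero_of_density_pos
    (hsol : IsTOVSolution G c ρ m p (ENNReal.ofReal R₀)) (hG : 0 < G) (hc : c ≠ 0)
    (hρ₀ : ∀ q ≥ 0, 0 ≤ ρ q) (hR₀ : 0 < R₀) (hM : Tendsto m (𝓝[<] R₀) (𝓝 M)) (hMpos : 0 < M)
    {ρR : ℝ} (hρ : Tendsto (fun r => ρ (p r)) (𝓝[<] R₀) (𝓝 ρR)) (hρR : 0 < ρR) :
    ¬ Tendsto (metricCoeff G c m) (𝓝[<] R₀) (𝓝 0) := by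
  intro hy
  have hdom : ∀ᶠ r in 𝓝[<] R₀, r ∈ Ioo 0 R₀ := Ioo_mem_nhdsLT hR₀
  have hslope := tendsto_metricCoeff_deriv (G := G) hc hR₀.ne' hM hρ
  set s := 2 * G * M / (c ^ 2 * R₀ ^ 2) - 8 * π * G * R₀ * ρR / c ^ 2
  have hs : -(|s| + 1) < s := by linarith [neg_abs_le s]
  have hslope_ge : ∀ᶠ r in 𝓝[<] R₀, HasDerivAt (metricCoeff G c m)
      (2 * G * m r / (c ^ 2 * r ^ 2) - 8 * π * G * r * ρ (p r) / c ^ 2) r ∧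
      -(|s| + 1) ≤ 2 * G * m r / (c ^ 2 * r ^ 2) - 8 * π * G * r * ρ (p r) / c ^ 2 := by
    filter_upwards [hdom, hslope.eventually (eventually_gt_nhds hs)] with r hr hr'
    exact ⟨hsol.hasDerivAt_metricCoeff hc hr, hr'.le⟩
  have hy_le := eventually_le_mul_sub_of_hasDerivAt_ge hslope_ge hy
  set A := G * M * ρR / R₀ ^ 2
  have hA : Tendsto (fun r => G * m r * ρ (p r) / r ^ 2) (𝓝[<] R₀) (𝓝 A) :=
    ((hM.const_mul G).mul hρ).div ((tendsto_nhdsWithin_of_tendsto_nhds tendsto_id).pow 2)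
      (by positivity)
  have hApos : 0 < A := by positivity
  have hp : Tendsto p (𝓝[<] R₀) atBot := by
    refine tendsto_atBot_of_hasDerivAt_le_neg_div (f' := deriv p) (C := A / 2 / (|s| + 1))
      (by positivity) ?_
    filter_upwards [hdom, hy_le, hA.eventually (eventually_ge_nhds (half_lt_self hApos))]
      with r hr hyr hAr
    obtain ⟨p', hp', hle⟩ := hsol.exists_hasDerivAt_pressure_le hG.le hc hρ₀ hr
    refine ⟨hp'.differentiableAt.hasDerivAt, hp'.deriv ▸ hle.trans (neg_le_neg ?_)⟩
    calc A / 2 / (|s| + 1) / (R₀ - r) = A / 2 / ((|s| + 1) * (R₀ - r)) := div_div _ _ _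
      _ ≤ _ := div_le_div₀ ((half_pos hApos).le.trans hAr) hAr (hsol.metricCoeff_pos hc hr) hyr
  obtain ⟨r, hr, hneg⟩ := (hdom.and (hp.eventually (eventually_lt_atBot 0))).exists
  exact (hsol r (by rwa [tovDomain_ofReal])).1.not_gt hneg

theorem surface_metricCoeff_pos (hsol : IsTOVSolution G c ρ m p (ENNReal.ofReal R₀))
    (hG : 0 < G) (hc : c ≠ 0) (hρ₀ : ∀ q ≥ 0, 0 ≤ ρ q) (hρc : ContinuousOn ρ (Ici 0))
    (hR₀ : 0 < R₀) (hM : Tendsto m (𝓝[<] R₀) (𝓝 M)) : 0 < 1 - 2 * G * M / (c ^ 2 * R₀) := by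
  have hy := tendsto_metricCoeff_nhdsLT (G := G) hc hR₀.ne' hM
  refine (ge_of_tendsto hy ?_).lt_of_ne fun hy₀ => ?_
  · filter_upwards [Ioo_mem_nhdsLT hR₀] with r hr using (hsol.metricCoeff_pos hc hr).le
  rw [← hy₀] at hy
  have hMpos := hsol.mass_pos_of_tendsto hρ₀ hR₀ hM
  obtain ⟨ρR, hρR, hρ⟩ := hsol.exists_tendsto_density hG.le hc hρ₀ hρc hR₀
  rcases hρR.eq_or_lt with rfl | hρR
  · exact hsol.not_tendsto_metricCoeff_zero_of_density_zero hG hc hR₀ hM hMpos hρ hy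
  · exact hsol.not_tendsto_metricCoeff_zero_of_density_pos hG hc hρ₀ hR₀ hM hMpos hρ hρR hy

end IsTOVSolution

theorem stmt9_general
    (G c : ℝ) (hG : 0 < G) (hc : 0 < c)
    (ρ : ℝ → ℝ) (hρ : IsBarotropic ρ)
    (m p : ℝ → ℝ) (R : ENNReal) (pc : ℝ)
    (hsol : IsRegularTOVSolution G c ρ m p R pc)
    (hRfin : R ≠ ⊤) (M : ℝ)
    (hM : Filter.Tendsto m (nhdsWithin R.toReal (Iio R.toReal)) (nhds M)) :
    G * M / (c ^ 2 * R.toReal) < 1 / 2 ∧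
    ∃ ε > (0:ℝ), ∀ r ∈ tovDomain R, ε ≤ 1 - 2 * G * m r / (c ^ 2 * r) := by
  obtain ⟨⟨hTOV, -⟩, -, -, hmlim⟩ := hsol
  obtain ⟨hρc, -, hρ₀, -⟩ := hρ
  rw [← ENNReal.ofReal_toReal hRfin] at hTOV
  have hdom : tovDomain R = Ioo 0 R.toReal := by
    rw [← tovDomain_ofReal, ENNReal.ofReal_toReal hRfin]
  rw [hdom]
  rcases (ENNReal.toReal_nonneg (a := R)).eq_or_lt with hR₀ | hR₀
  · refine ⟨by simp [← hR₀], 1, one_pos, fun r hr => ?_⟩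
    rw [← hR₀] at hr
    exact (hr.1.trans hr.2).false.elim
  have hsurf := hTOV.surface_metricCoeff_pos hG hc.ne' hρ₀ hρc hR₀ hM
  have hhalf : G * M / (c ^ 2 * R.toReal) = 2 * G * M / (c ^ 2 * R.toReal) / 2 := by ring
  refine ⟨by linarith, ?_⟩
  exact exists_pos_le_of_tendsto_pos hR₀
    (fun r hr => (hTOV.hasDerivAt_metricCoeff hc.ne' hr).continuousAt.continuousWithinAt)
    (fun r hr => hTOV.metricCoeff_pos hc.ne' hr) (tendsto_metricCoeff_nhdsGT_zero hmlim) one_pos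
    (tendsto_metricCoeff_nhdsLT hc.ne' hR₀.ne' hM) hsurf

/-- A regular TOV solution for an asymptotically polytropic/linear
equation of state with finite radius `R` and finite total mass `M` satisfies
`GM/(c²R) < 1/2`, and `1 − 2Gm(r)/(c²r)` is bounded away from zero on `(0,R)`. -/
theorem stmt9
    (G c : ℝ) (hG : 0 < G) (hc : 0 < c)
    (ρ : ℝ → ℝ) (hρ : IsBarotropic ρ)
    (n₀ γ₁ : ℝ) (hapl : IsAsymptoticallyPolytropicLinear c ρ n₀ γ₁)
    (m p : ℝ → ℝ) (R : ENNReal) (pc : ℝ)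
    (hsol : IsRegularTOVSolution G c ρ m p R pc)
    (hRfin : R ≠ ⊤) (M : ℝ)
    (hM : Filter.Tendsto m (nhdsWithin R.toReal (Iio R.toReal)) (nhds M)) :
    G * M / (c ^ 2 * R.toReal) < 1 / 2 ∧
    ∃ ε > (0:ℝ), ∀ r ∈ tovDomain R, ε ≤ 1 - 2 * G * m r / (c ^ 2 * r) :=
  stmt9_general G c hG hc ρ hρ m p R pc hsol hRfin M hM
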